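/- Suppose that for every i ∈ {1,…,n} the number m_i := −2λ_i is a natural number belonging to {0, 1, …, k−1}, and let r = max_i m_i. Then the rank of the linear map T : ℝ^{{α∈ℕⁿ : |α|=k}} → ℝ^{{β∈ℕⁿ : |β|=k−1}}, (T D)_β = Σ_{i=1}^n (β_i + 1)(β_i + 2λ_i) D_{β^i}, satisfies N_{k−1} − C(n + k − r − 3, k − r − 1) ≤ rank(T) ≤ N_{k−1}; equivalently, the dimension of the cokernel of T is at most C(n + k − r − 3, k − r − 1). -/

import Mathlib

open scoped BigOperators

noncomputable section

/-- For `|β| = k − 1`, the multi-index `β^i` (the `i`-th entry increased by `1`) has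
`|β^i| = k`. -/
def upIdx (n k : ℕ) (hk : 1 ≤ k) (β : {β : Fin n → ℕ // ∑ i, β i = k - 1}) (i : Fin n) :
    {α : Fin n → ℕ // ∑ i, α i = k} :=
  ⟨Function.update β.1 i (β.1 i + 1), by
    have h1 : ∑ j, Function.update β.1 i (β.1 i + 1) j
        = (β.1 i + 1) + ∑ j ∈ Finset.univ.erase i, β.1 j := by
      rw [← Finset.add_sum_erase _ _ (Finset.mem_univ i), Function.update_self]
      congr 1
      exact Finset.sum_congr rfl fun j hj =>
        Function.update_of_ne (Finset.mem_erase.1 hj).1 _ _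
    have h2 : β.1 i + ∑ j ∈ Finset.univ.erase i, β.1 j = k - 1 := by
      rw [Finset.add_sum_erase _ _ (Finset.mem_univ i)]; exact β.2
    omega⟩

/-- The linear map `T : ℝ^{{|α|=k}} → ℝ^{{|β|=k−1}}`,
`(T D)_β = Σᵢ (βᵢ+1)(βᵢ+2λᵢ) D_{βⁱ}`. -/
def Tmap (n k : ℕ) (hk : 1 ≤ k) (lam : Fin n → ℝ) :
    ({α : Fin n → ℕ // ∑ i, α i = k} → ℝ) →ₗ[ℝ]
      ({β : Fin n → ℕ // ∑ i, β i = k - 1} → ℝ) where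
  toFun D := fun β => ∑ i, ((β.1 i : ℝ) + 1) * ((β.1 i : ℝ) + 2 * lam i)
    * D (upIdx n k hk β i)
  map_add' D E := by
    funext β
    simp only [Pi.add_apply, mul_add]
    rw [Finset.sum_add_distrib]
  map_smul' r D := by
    funext β
    simp only [Pi.smul_apply, smul_eq_mul, RingHom.id_apply]
    rw [Finset.mul_sum]
    exact Finset.sum_congr rfl fun i _ => by ring

/-!
Choose `i₀` with `m_{i₀} = r`. Applied to the unit vector at `β^{i₀}`, `T` has entry
`(β_{i₀}+1)(β_{i₀}-r)` in row `β` and is otherwise supported on rows `β'` with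
`β'_{i₀} = β_{i₀}+1`. Ordered by the `i₀`-th entry, the rows with `β_{i₀} ≠ r` are therefore
triangular with nonzero pivots, so `T` maps onto them. The remaining rows, `β_{i₀} = r`, are the
weak compositions of `k-1-r` into `n-1` parts, of which there are `C(n+k-r-3, k-r-1)`.
-/

instance {ι : Type*} [Fintype ι] [DecidableEq ι] (s : ℕ) :
    Fintype {P : ι → ℕ // ∑ i, P i = s} :=
  Fintype.ofEquiv _ (Sym.equivNatSumOfFintype ι s)

theorem card_sum_eq_choose {ι : Type*} [Fintype ι] [DecidableEq ι] (s : ℕ) :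
    Fintype.card {P : ι → ℕ // ∑ i, P i = s} = (Fintype.card ι + s - 1).choose s := by
  rw [← Fintype.card_congr (Sym.equivNatSumOfFintype ι s), Sym.card_sym_eq_choose]

theorem card_apply_eq_le_card_sum_eq_sub {ι : Type*} [Fintype ι] [DecidableEq ι]
    (s : ℕ) (i : ι) (r : ℕ) :
    Fintype.card {P : {P : ι → ℕ // ∑ i, P i = s} // P.1 i = r} ≤
      Fintype.card {Q : {j // j ≠ i} → ℕ // ∑ j, Q j = s - r} := by
  refine Fintype.card_le_of_injective (fun P => ⟨fun j => P.1.1 j, ?_⟩) ?_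
  · have := P.1.2
    rw [← Finset.add_sum_erase _ _ (Finset.mem_univ i), P.2] at this
    rw [← Finset.sum_subtype (Finset.univ.erase i) (by simp)]
    omega
  · intro P Q h
    ext j
    by_cases hj : j = i
    · rw [hj, P.2, Q.2]
    · exact congrFun (congrArg Subtype.val h) ⟨j, hj⟩

theorem LinearMap.range_eq_top_of_triangular {K V ι α : Type*} [DivisionRing K] [AddCommGroup V]
    [Module K V] [Finite ι] [Preorder α] (f : V →ₗ[K] ι → K) (level : ι → α)
    (hf : ∀ s, ∃ v, f v s ≠ 0 ∧ ∀ t ≠ s, f v t ≠ 0 → level s < level t) :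
    LinearMap.range f = ⊤ := by
  classical
  cases nonempty_fintype ι
  suffices hsingle : ∀ s, Pi.single s 1 ∈ LinearMap.range f by
    rw [eq_top_iff, ← (Pi.basisFun K ι).span_eq, Submodule.span_le]
    rintro _ ⟨s, rfl⟩
    simpa using hsingle s
  let above : ι → ι → Prop := fun t s => level s < level t
  have : IsTrans ι above := ⟨fun _ _ _ h₁ h₂ => h₂.trans h₁⟩
  have : Std.Irrefl above := ⟨fun _ => lt_irrefl _⟩
  intro s
  induction s using (Finite.wellFounded_of_trans_of_irrefl above).induction with
  | _ s ih =>
  obtain ⟨v, hvs, hv⟩ := hf s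
  have single_eq_smul (t : ι) (c : K) : Pi.single t c = c • Pi.single t (1 : K) := by
    rw [← Pi.single_smul', smul_eq_mul, mul_one]
  have hsplit : Pi.single s (f v s) = f v - ∑ t ∈ Finset.univ.erase s, Pi.single t (f v t) := by
    rw [eq_sub_iff_add_eq,
      Finset.add_sum_erase _ (fun t => Pi.single t (f v t)) (Finset.mem_univ s),
      Finset.univ_sum_single]
  have hmem : Pi.single s (f v s) ∈ LinearMap.range f := by
    rw [hsplit]
    refine sub_mem (LinearMap.mem_range_self f v) (sum_mem fun t ht => ?_)
    by_cases hvt : f v t = 0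
    · simp [hvt]
    · rw [single_eq_smul]
      exact Submodule.smul_mem _ _ (ih t (hv t (Finset.ne_of_mem_erase ht) hvt))
  rw [single_eq_smul] at hmem
  exact (Submodule.smul_mem_iff _ hvs).1 hmem

section Tmap

variable {n k : ℕ} (hk : 1 ≤ k) (lam : Fin n → ℝ)

theorem upIdx_apply_self (β : {β : Fin n → ℕ // ∑ i, β i = k - 1}) (i : Fin n) :
    (upIdx n k hk β i).1 i = β.1 i + 1 :=
  Function.update_self ..

theorem upIdx_apply_of_ne (β : {β : Fin n → ℕ // ∑ i, β i = k - 1}) {i j : Fin n} (h : j ≠ i) :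
    (upIdx n k hk β i).1 j = β.1 j :=
  Function.update_of_ne h ..

theorem upIdx_injective (i : Fin n) : Function.Injective (upIdx n k hk · i) := by
  intro β β' h
  ext j
  have hj := congrFun (congrArg Subtype.val h) j
  by_cases hji : j = i
  · subst hji
    simpa only [upIdx_apply_self, Nat.add_right_cancel_iff] using hj
  · simpa only [upIdx_apply_of_ne hk _ hji] using hj

theorem upIdx_eq_upIdx_of_ne {β β' : {β : Fin n → ℕ // ∑ i, β i = k - 1}} {i j : Fin n}
    (h : upIdx n k hk β i = upIdx n k hk β' j) (hij : i ≠ j) : β.1 j = β'.1 j + 1 := by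
  have hj := congrFun (congrArg Subtype.val h) j
  rwa [upIdx_apply_of_ne hk _ hij.symm, upIdx_apply_self] at hj

theorem Tmap_single_apply (α : {α : Fin n → ℕ // ∑ i, α i = k})
    (β : {β : Fin n → ℕ // ∑ i, β i = k - 1}) :
    Tmap n k hk lam (Pi.single α 1) β = ∑ i with upIdx n k hk β i = α,
      ((β.1 i : ℝ) + 1) * ((β.1 i : ℝ) + 2 * lam i) := by
  simp only [Tmap, LinearMap.coe_mk, AddHom.coe_mk, Pi.single_apply, mul_ite, mul_one, mul_zero,
    Finset.sum_ite, Finset.sum_const_zero, add_zero]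

theorem Tmap_single_upIdx_self (β : {β : Fin n → ℕ // ∑ i, β i = k - 1}) (i : Fin n) :
    Tmap n k hk lam (Pi.single (upIdx n k hk β i) 1) β
      = ((β.1 i : ℝ) + 1) * ((β.1 i : ℝ) + 2 * lam i) := by
  rw [Tmap_single_apply, Finset.sum_eq_single_of_mem i (by simp)]
  intro j hj hji
  have := upIdx_eq_upIdx_of_ne hk (Finset.mem_filter.1 hj).2 hji
  omega

theorem range_funLeft_comp_Tmap_eq_top (i₀ : Fin n) (r : ℕ) (hr : 2 * lam i₀ = -r) :
    LinearMap.range (LinearMap.funLeft ℝ ℝ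
      (Subtype.val : {β : {β : Fin n → ℕ // ∑ i, β i = k - 1} // β.1 i₀ ≠ r} → _)
        ∘ₗ Tmap n k hk lam) = ⊤ := by
  refine LinearMap.range_eq_top_of_triangular _ (fun β => β.1.1 i₀) fun β =>
    ⟨Pi.single (upIdx n k hk β.1 i₀) 1, ?_, fun β' hne hβ' => ?_⟩
  · have hβ : (β.1.1 i₀ : ℝ) ≠ r := by exact_mod_cast β.2
    simp only [LinearMap.coe_comp, Function.comp_apply, LinearMap.funLeft_apply,
      Tmap_single_upIdx_self, hr]
    exact mul_ne_zero (by positivity) (by rwa [← sub_eq_add_neg, sub_ne_zero])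
  · simp only [LinearMap.coe_comp, Function.comp_apply, LinearMap.funLeft_apply,
      Tmap_single_apply] at hβ'
    obtain ⟨i, hi, -⟩ := Finset.exists_ne_zero_of_sum_ne_zero hβ'
    have hi := (Finset.mem_filter.1 hi).2
    by_cases hii₀ : i = i₀
    · subst hii₀
      exact absurd (Subtype.ext (upIdx_injective hk i hi)) hne
    · have := upIdx_eq_upIdx_of_ne hk hi hii₀
      omega

end Tmap

/-- rank estimate in Theorem 2.6: if every `mᵢ := −2λᵢ` is a natural
number in `{0,…,k−1}` and `r = maxᵢ mᵢ`, then
`N_{k−1} − C(n+k−r−3, k−r−1) ≤ rank T ≤ N_{k−1}`. -/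
theorem Tmap_rank_bounds (n k : ℕ) (hn : 1 ≤ n) (hk : 1 ≤ k) (lam : Fin n → ℝ)
    (m : Fin n → ℕ) (hm : ∀ i, (m i : ℝ) = -(2 * lam i) ∧ m i < k)
    (r : ℕ) (hr : r = Finset.univ.sup m) :
    Nat.card {β : Fin n → ℕ // ∑ i, β i = k - 1}
        - Nat.choose (n + k - r - 3) (k - r - 1)
      ≤ Module.finrank ℝ (LinearMap.range (Tmap n k hk lam)) ∧
    Module.finrank ℝ (LinearMap.range (Tmap n k hk lam))
      ≤ Nat.card {β : Fin n → ℕ // ∑ i, β i = k - 1} := by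
  obtain ⟨i₀, -, hi₀⟩ :=
    Finset.exists_mem_eq_sup Finset.univ (Finset.univ_nonempty_iff.2 ⟨⟨0, hn⟩⟩) m
  rw [← hr] at hi₀
  have hrk : r < k := hi₀ ▸ (hm i₀).2
  have hlam : 2 * lam i₀ = -r := by rw [hi₀]; linarith [(hm i₀).1]
  set B := {β : Fin n → ℕ // ∑ i, β i = k - 1}
  have hfiber : Fintype.card {β : B // β.1 i₀ = r} ≤ (n + k - r - 3).choose (k - r - 1) := by
    calc _ ≤ _ := card_apply_eq_le_card_sum_eq_sub (k - 1) i₀ r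
      _ = _ := by
        rw [card_sum_eq_choose, Fintype.card_subtype_compl, Fintype.card_subtype_eq,
          Fintype.card_fin]
        congr 1 <;> omega
  have hrows : Fintype.card {β : B // β.1 i₀ ≠ r} ≤
      Module.finrank ℝ (LinearMap.range (Tmap n k hk lam)) := by
    rw [← Module.finrank_fintype_fun_eq_card ℝ, ← finrank_top ℝ,
      ← range_funLeft_comp_Tmap_eq_top hk lam i₀ r hlam, LinearMap.range_comp]
    exact Submodule.finrank_map_le _ _
  rw [Nat.card_eq_fintype_card]
  refine ⟨?_, (Submodule.finrank_le _).trans_eq (Module.finrank_fintype_fun_eq_card ℝ)⟩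
  calc Fintype.card B - (n + k - r - 3).choose (k - r - 1)
      ≤ Fintype.card B - Fintype.card {β : B // β.1 i₀ = r} := Nat.sub_le_sub_left hfiber _
    _ = Fintype.card {β : B // β.1 i₀ ≠ r} := (Fintype.card_subtype_compl _).symm
    _ ≤ _ := hrows
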